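/- There are positive constants c₁, C₁ such that for all t ≥ 1, with λ₁(ξ) = (-1+√(1-4|ξ|²))/2 and λ₂(ξ) = (-1-√(1-4|ξ|²))/2, and r₀ > 0 sufficiently small: c₁(1+t)^{-3/2} ≤ ∫_{|ξ|<r₀} |(λ₁e^{λ₂t} - λ₂e^{λ₁t})/(λ₁-λ₂)|² dξ ≤ C₁(1+t)^{-3/2}. -/

import Mathlib

open MeasureTheory Real


noncomputable def gfun (t r : ℝ) : ℝ :=
  |(((-1 + Real.sqrt (1 - 4 * r ^ 2)) / 2) *
      Real.exp ((-1 - Real.sqrt (1 - 4 * r ^ 2)) / 2 * t) -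
    ((-1 - Real.sqrt (1 - 4 * r ^ 2)) / 2) *
      Real.exp ((-1 + Real.sqrt (1 - 4 * r ^ 2)) / 2 * t)) /
    (((-1 + Real.sqrt (1 - 4 * r ^ 2)) / 2) -
      ((-1 - Real.sqrt (1 - 4 * r ^ 2)) / 2))| ^ 2

lemma gfun_nonneg (t r : ℝ) : 0 ≤ gfun t r := by rw [gfun]; positivity

lemma gfun_upper {t r : ℝ} (ht : 0 ≤ t) (hr : r ^ 2 < 1 / 16) :
    gfun t r ≤ 4 * Real.exp (-(2 * t) * r ^ 2) + Real.exp (-t) := by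
  set s := Real.sqrt (1 - 4 * r ^ 2) with hs
  have hs0 : 0 ≤ s := Real.sqrt_nonneg _
  have hss : s ^ 2 = 1 - 4 * r ^ 2 := Real.sq_sqrt (by nlinarith)
  have hs1 : s ≤ 1 := by nlinarith [sq_nonneg r]
  have hs45 : 4 / 5 ≤ s := by nlinarith
  have hD : ((-1 + s) / 2) - ((-1 - s) / 2) = s := by ring
  set E₁ := Real.exp ((-1 + s) / 2 * t) with hE₁d
  set E₂ := Real.exp ((-1 - s) / 2 * t) with hE₂d
  set A := Real.exp (-(r ^ 2) * t) with hAd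
  set B := Real.exp (-(1 / 2) * t) with hBd
  have hA0 : 0 < A := Real.exp_pos _
  have hB0 : 0 < B := Real.exp_pos _
  have hE1 : E₁ ≤ A := by
    apply Real.exp_le_exp.2
    apply mul_le_mul_of_nonneg_right _ ht
    nlinarith
  have hE2 : E₂ ≤ B := by
    apply Real.exp_le_exp.2
    apply mul_le_mul_of_nonneg_right _ ht
    nlinarith
  have hE10 : 0 < E₁ := Real.exp_pos _
  have hE20 : 0 < E₂ := Real.exp_pos _
  have key : |(((-1 + s) / 2) * E₂ - ((-1 - s) / 2) * E₁) / s| ≤ 5 / 4 * A + 1 / 8 * B := by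
    rw [abs_div, abs_of_nonneg hs0, div_le_iff₀ (by linarith)]
    calc |((-1 + s) / 2) * E₂ - ((-1 - s) / 2) * E₁|
        ≤ (1 - s) / 2 * E₂ + (1 + s) / 2 * E₁ := by
          refine (abs_sub _ _).trans ?_
          rw [abs_mul, abs_mul, abs_of_pos hE10, abs_of_pos hE20]
          have h1 : |(-1 + s) / 2| = (1 - s) / 2 := by
            rw [abs_of_nonpos (by linarith)]; ring
          have h2 : |(-1 - s) / 2| = (1 + s) / 2 := by
            rw [abs_of_nonpos (by linarith)]
            ring_nf
          rw [h1, h2]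
      _ ≤ (5 / 4 * A + 1 / 8 * B) * s := by nlinarith
  have hsq : gfun t r ≤ (5 / 4 * A + 1 / 8 * B) ^ 2 := by
    rw [gfun, hD]
    exact pow_le_pow_left₀ (abs_nonneg _) key 2
  have hA2 : A ^ 2 = Real.exp (-(2 * t) * r ^ 2) := by
    rw [sq, ← Real.exp_add]; ring_nf
  have hB2 : B ^ 2 = Real.exp (-t) := by
    rw [sq, ← Real.exp_add]; ring_nf
  nlinarith [sq_nonneg (A - B)]

lemma gfun_lower {t r : ℝ} (ht : 1 ≤ t) (hrt : r ^ 2 * t ≤ 1 / 16) :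
    1 / 2 ≤ gfun t r := by
  have hr : r ^ 2 ≤ 1 / 16 := by nlinarith [sq_nonneg r]
  set s := Real.sqrt (1 - 4 * r ^ 2) with hs
  have hs0 : 0 ≤ s := Real.sqrt_nonneg _
  have hss : s ^ 2 = 1 - 4 * r ^ 2 := Real.sq_sqrt (by nlinarith)
  have hs1 : s ≤ 1 := by nlinarith [sq_nonneg r]
  have hs45 : 4 / 5 ≤ s := by nlinarith
  have hD : ((-1 + s) / 2) - ((-1 - s) / 2) = s := by ring
  set E₁ := Real.exp ((-1 + s) / 2 * t) with hE₁d
  set E₂ := Real.exp ((-1 - s) / 2 * t) with hE₂d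
  have hE10 : 0 < E₁ := Real.exp_pos _
  have hE20 : 0 < E₂ := Real.exp_pos _
  -- E₁ ≥ exp(-2 r² t) ≥ 7/8
  have hE1 : (7 : ℝ) / 8 ≤ E₁ := by
    have h1 : -2 * (r ^ 2 * t) ≤ (-1 + s) / 2 * t := by
      have : -2 * r ^ 2 ≤ (-1 + s) / 2 := by nlinarith
      nlinarith
    have h2 : (-1 / 8 : ℝ) ≤ (-1 + s) / 2 * t := by nlinarith
    calc (7 : ℝ) / 8 = -1 / 8 + 1 := by norm_num
      _ ≤ Real.exp (-1 / 8) := Real.add_one_le_exp _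
      _ ≤ E₁ := Real.exp_le_exp.2 h2
  -- E₂ ≤ exp(-1/2) ≤ 2/3
  have hE2 : E₂ ≤ 2 / 3 := by
    have h1 : (-1 - s) / 2 * t ≤ -(1 / 2) := by nlinarith
    have h2 : E₂ ≤ Real.exp (-(1 / 2)) := Real.exp_le_exp.2 h1
    have h3 : Real.exp (-(1 / 2)) ≤ 2 / 3 := by
      have h4 : (3 : ℝ) / 2 ≤ Real.exp (1 / 2) := by
        have := Real.add_one_le_exp (1 / 2 : ℝ); linarith
      rw [Real.exp_neg, inv_le_comm₀ (Real.exp_pos _) (by norm_num)]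
      norm_num
      linarith
    linarith
  have key : (3 : ℝ) / 4 ≤ (((-1 + s) / 2) * E₂ - ((-1 - s) / 2) * E₁) / s := by
    rw [le_div_iff₀ (by linarith)]
    have c1 : (1 + s) / 2 * E₁ ≥ (1 + s) / 2 * (7 / 8) := by nlinarith
    have c2 : (1 - s) / 2 * E₂ ≤ (1 - s) / 2 * (2 / 3) := by nlinarith
    nlinarith
  rw [gfun, hD]
  have h2 : (3 : ℝ) / 4 ≤ |(((-1 + s) / 2) * E₂ - ((-1 - s) / 2) * E₁) / s| :=
    le_trans key (le_abs_self _)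
  nlinarith [abs_nonneg ((((-1 + s) / 2) * E₂ - ((-1 - s) / 2) * E₁) / s)]

abbrev Esp := EuclideanSpace ℝ (Fin 3)

lemma gfun_meas (t : ℝ) : Measurable fun ξ : Esp => gfun t ‖ξ‖ := by
  unfold gfun
  fun_prop

lemma gauss_integrable {b : ℝ} (hb : 0 < b) :
    Integrable (fun ξ : Esp => Real.exp (-b * ‖ξ‖ ^ 2)) := by
  have h := (GaussianFourier.integrable_cexp_neg_mul_sq_norm_add (V := Esp) (b := (b : ℂ))
      (by simpa using hb) 0 (0 : Esp)).norm
  refine h.congr (Filter.Eventually.of_forall fun ξ => ?_)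
  simp only [Complex.norm_exp]
  norm_num
  left
  norm_cast

lemma gauss_integral {b : ℝ} (hb : 0 < b) :
    ∫ ξ : Esp, Real.exp (-b * ‖ξ‖ ^ 2) = (π / b) ^ ((3 : ℝ) / 2) := by
  rw [GaussianFourier.integral_rexp_neg_mul_sq_norm hb]
  norm_num [finrank_euclideanSpace]

lemma ball_vol (r : ℝ) (hr : 0 < r) :
    (volume (Metric.ball (0 : Esp) r)).toReal =
      r ^ 3 * (volume (Metric.ball (0 : Esp) 1)).toReal := by
  rw [Measure.addHaar_ball_of_pos _ _ hr]
  rw [ENNReal.toReal_mul, ENNReal.toReal_ofReal (by positivity)]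
  norm_num [finrank_euclideanSpace]

set_option maxHeartbeats 1000000

/-- Two-sided heat-kernel-type bound for the `(1,1)` entry of the Fourier-space Green
function of the curl-free part: with `λ₁ = (-1+√(1-4|ξ|²))/2`, `λ₂ = (-1-√(1-4|ξ|²))/2`,
for sufficiently small `r₀ > 0` there are `c₁, C₁ > 0` with
`c₁(1+t)^{-3/2} ≤ ∫_{|ξ|<r₀} |(λ₁e^{λ₂t} - λ₂e^{λ₁t})/(λ₁-λ₂)|² dξ ≤ C₁(1+t)^{-3/2}`
for all `t ≥ 1`. -/
theorem green_entry_two_sided_bound :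
    ∃ r₀ > 0, ∃ c₁ > 0, ∃ C₁ > 0, ∀ t : ℝ, 1 ≤ t →
      c₁ * (1 + t) ^ (-(3 : ℝ) / 2) ≤
        (∫ ξ in Metric.ball (0 : EuclideanSpace ℝ (Fin 3)) r₀,
          |(((-1 + Real.sqrt (1 - 4 * ‖ξ‖ ^ 2)) / 2) *
              Real.exp ((-1 - Real.sqrt (1 - 4 * ‖ξ‖ ^ 2)) / 2 * t) -
            ((-1 - Real.sqrt (1 - 4 * ‖ξ‖ ^ 2)) / 2) *
              Real.exp ((-1 + Real.sqrt (1 - 4 * ‖ξ‖ ^ 2)) / 2 * t)) /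
            (((-1 + Real.sqrt (1 - 4 * ‖ξ‖ ^ 2)) / 2) -
              ((-1 - Real.sqrt (1 - 4 * ‖ξ‖ ^ 2)) / 2))| ^ 2) ∧
      (∫ ξ in Metric.ball (0 : EuclideanSpace ℝ (Fin 3)) r₀,
          |(((-1 + Real.sqrt (1 - 4 * ‖ξ‖ ^ 2)) / 2) *
              Real.exp ((-1 - Real.sqrt (1 - 4 * ‖ξ‖ ^ 2)) / 2 * t) -
            ((-1 - Real.sqrt (1 - 4 * ‖ξ‖ ^ 2)) / 2) *
              Real.exp ((-1 + Real.sqrt (1 - 4 * ‖ξ‖ ^ 2)) / 2 * t)) /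
            (((-1 + Real.sqrt (1 - 4 * ‖ξ‖ ^ 2)) / 2) -
              ((-1 - Real.sqrt (1 - 4 * ‖ξ‖ ^ 2)) / 2))| ^ 2) ≤
        C₁ * (1 + t) ^ (-(3 : ℝ) / 2) := by
  have hgeq : ∀ (t : ℝ) (ξ : EuclideanSpace ℝ (Fin 3)),
      |(((-1 + Real.sqrt (1 - 4 * ‖ξ‖ ^ 2)) / 2) *
          Real.exp ((-1 - Real.sqrt (1 - 4 * ‖ξ‖ ^ 2)) / 2 * t) -
        ((-1 - Real.sqrt (1 - 4 * ‖ξ‖ ^ 2)) / 2) *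
          Real.exp ((-1 + Real.sqrt (1 - 4 * ‖ξ‖ ^ 2)) / 2 * t)) /
        (((-1 + Real.sqrt (1 - 4 * ‖ξ‖ ^ 2)) / 2) -
          ((-1 - Real.sqrt (1 - 4 * ‖ξ‖ ^ 2)) / 2))| ^ 2 = gfun t ‖ξ‖ :=
    fun t ξ => rfl
  simp only [hgeq]
  -- constants
  set V₁ : ℝ := (volume (Metric.ball (0 : Esp) 1)).toReal with hV₁
  set V : ℝ := (volume (Metric.ball (0 : Esp) (1/4))).toReal with hV
  have hV₁pos : 0 < V₁ := by
    rw [hV₁]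
    exact ENNReal.toReal_pos (Metric.measure_ball_pos volume 0 one_pos).ne'
      measure_ball_lt_top.ne
  have hVpos : 0 < V := by
    rw [hV]
    exact ENNReal.toReal_pos (Metric.measure_ball_pos volume 0 (by norm_num)).ne'
      measure_ball_lt_top.ne
  refine ⟨1/4, by norm_num, V₁ / 128, by positivity,
    4 * π ^ ((3:ℝ)/2) + 4 * V, by positivity, fun t ht => ?_⟩
  have ht0 : (0:ℝ) < t := lt_of_lt_of_le one_pos ht
  have hst : 1 ≤ Real.sqrt t := by
    rw [show (1:ℝ) = Real.sqrt 1 by simp]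
    exact Real.sqrt_le_sqrt ht
  have hst0 : 0 < Real.sqrt t := lt_of_lt_of_le one_pos hst
  set P : ℝ := (1 + t) ^ (-(3:ℝ)/2) with hPdef
  -- rpow facts
  have h32 : ∀ x : ℝ, 0 ≤ x → x ^ ((3:ℝ)/2) = Real.sqrt x ^ 3 := by
    intro x hx
    rw [show (3:ℝ)/2 = (1/2) * ((3:ℕ):ℝ) by norm_num, Real.rpow_mul hx,
      Real.rpow_natCast, ← Real.sqrt_eq_rpow]
  have hPinv : P = ((1 + t) ^ ((3:ℝ)/2))⁻¹ := by
    rw [hPdef, show (-(3:ℝ)/2) = -((3:ℝ)/2) by norm_num, Real.rpow_neg (by linarith)]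
  have hP32pos : 0 < (1 + t) ^ ((3:ℝ)/2) := Real.rpow_pos_of_pos (by linarith) _
  -- integrability of the integrand on the ball
  have hball : ∀ x : Esp, x ∈ Metric.ball (0:Esp) (1/4) → ‖x‖ ^ 2 < 1/16 := by
    intro x hx
    rw [mem_ball_zero_iff] at hx
    nlinarith [norm_nonneg x]
  have hint : IntegrableOn (fun ξ : Esp => gfun t ‖ξ‖)
      (Metric.ball (0:Esp) (1/4)) volume := by
    apply Measure.integrableOn_of_bounded (M := 5) measure_ball_lt_top.ne
      (gfun_meas t).aestronglyMeasurable
    refine (ae_restrict_iff' measurableSet_ball).2 (Filter.Eventually.of_forall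
      fun x hx => ?_)
    rw [Real.norm_eq_abs, abs_of_nonneg (gfun_nonneg _ _)]
    have h1 := gfun_upper ht0.le (hball x hx)
    have h2 : Real.exp (-(2*t) * ‖x‖^2) ≤ 1 := by
      apply Real.exp_le_one_iff.2
      nlinarith [norm_nonneg x, sq_nonneg ‖x‖]
    have h3 : Real.exp (-t) ≤ 1 := Real.exp_le_one_iff.2 (by linarith)
    linarith
  constructor
  · -- LOWER BOUND
    set ρ : ℝ := 1 / (4 * Real.sqrt t) with hρdef
    have hρpos : 0 < ρ := by positivity
    have hρle : ρ ≤ 1/4 := by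
      rw [hρdef, div_le_div_iff₀ (by positivity) (by norm_num)]
      nlinarith
    have hsub : Metric.ball (0:Esp) ρ ⊆ Metric.ball (0:Esp) (1/4) :=
      Metric.ball_subset_ball hρle
    have step1 : ∫ ξ in Metric.ball (0:Esp) ρ, gfun t ‖ξ‖ ≤
        ∫ ξ in Metric.ball (0:Esp) (1/4), gfun t ‖ξ‖ := by
      apply setIntegral_mono_set hint
        (Filter.Eventually.of_forall fun x => gfun_nonneg _ _)
        (HasSubset.Subset.eventuallyLE hsub)
    have step2 : (1/2) * (volume (Metric.ball (0:Esp) ρ)).toReal ≤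
        ∫ ξ in Metric.ball (0:Esp) ρ, gfun t ‖ξ‖ := by
      rw [← Measure.real_def]
      apply setIntegral_ge_of_const_le_real measurableSet_ball measure_ball_lt_top.ne
      · intro x hx
        apply gfun_lower ht
        rw [mem_ball_zero_iff] at hx
        have hρ2 : ρ^2 * t = 1/16 := by
          rw [hρdef]
          field_simp
          nlinarith [Real.sq_sqrt ht0.le]
        nlinarith [norm_nonneg x]
      · exact hint.mono_set hsub
    have hvol : (volume (Metric.ball (0:Esp) ρ)).toReal = ρ^3 * V₁ :=
      ball_vol ρ hρpos
    -- (√t)^3 ≤ (1+t)^{3/2}  hence  P ≤ ((√t)^3)⁻¹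
    have hmono : Real.sqrt t ^ 3 ≤ (1 + t) ^ ((3:ℝ)/2) := by
      rw [← h32 t ht0.le]
      exact Real.rpow_le_rpow ht0.le (by linarith) (by norm_num)
    have hPle : P ≤ (Real.sqrt t ^ 3)⁻¹ := by
      rw [hPinv]
      exact inv_anti₀ (by positivity) hmono
    have hρ3 : ρ^3 = (Real.sqrt t ^ 3)⁻¹ / 64 := by
      rw [hρdef]
      field_simp
      ring
    calc V₁ / 128 * P ≤ V₁ / 128 * (Real.sqrt t ^ 3)⁻¹ := by
          apply mul_le_mul_of_nonneg_left hPle (by positivity)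
      _ = (1/2) * (ρ^3 * V₁) := by rw [hρ3]; ring
      _ = (1/2) * (volume (Metric.ball (0:Esp) ρ)).toReal := by rw [hvol]
      _ ≤ ∫ ξ in Metric.ball (0:Esp) ρ, gfun t ‖ξ‖ := step2
      _ ≤ _ := step1
  · -- UPPER BOUND
    have h2t : (0:ℝ) < 2 * t := by linarith
    have hgi := gauss_integrable h2t
    have hbd : ∫ ξ in Metric.ball (0:Esp) (1/4), gfun t ‖ξ‖ ≤
        ∫ ξ in Metric.ball (0:Esp) (1/4),
          (4 * Real.exp (-(2*t) * ‖ξ‖^2) + Real.exp (-t)) := by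
      apply setIntegral_mono_on hint
        ((hgi.const_mul 4).integrableOn.add (integrableOn_const measure_ball_lt_top.ne))
        measurableSet_ball
      intro x hx
      exact gfun_upper ht0.le (hball x hx)
    have hsplit : ∫ ξ in Metric.ball (0:Esp) (1/4),
          (4 * Real.exp (-(2*t) * ‖ξ‖^2) + Real.exp (-t)) =
        4 * (∫ ξ in Metric.ball (0:Esp) (1/4), Real.exp (-(2*t) * ‖ξ‖^2)) +
          V * Real.exp (-t) := by
      rw [integral_add ((hgi.const_mul 4).integrableOn) (integrableOn_const
        measure_ball_lt_top.ne)]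
      rw [integral_const_mul, setIntegral_const, smul_eq_mul, Measure.real_def]
    have hgb : ∫ ξ in Metric.ball (0:Esp) (1/4), Real.exp (-(2*t) * ‖ξ‖^2) ≤
        (π / (2*t)) ^ ((3:ℝ)/2) := by
      rw [← gauss_integral h2t]
      exact setIntegral_le_integral hgi
        (Filter.Eventually.of_forall fun x => (Real.exp_pos _).le)
    -- (π/(2t))^{3/2} ≤ π^{3/2} * P
    have hpi : (π / (2*t)) ^ ((3:ℝ)/2) ≤ π ^ ((3:ℝ)/2) * P := by
      rw [Real.div_rpow Real.pi_pos.le h2t.le]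
      have h1 : (1 + t) ^ ((3:ℝ)/2) ≤ (2*t) ^ ((3:ℝ)/2) :=
        Real.rpow_le_rpow (by linarith) (by linarith) (by norm_num)
      calc π ^ ((3:ℝ)/2) / (2*t) ^ ((3:ℝ)/2)
          ≤ π ^ ((3:ℝ)/2) / (1 + t) ^ ((3:ℝ)/2) :=
            div_le_div_of_nonneg_left (by positivity) hP32pos h1
        _ = π ^ ((3:ℝ)/2) * P := by rw [hPinv, div_eq_mul_inv]
    -- exp(-t) ≤ 4 * P
    have hexp : Real.exp (-t) ≤ 4 * P := by
      have hu : Real.exp (t/2) * Real.exp (t/2) = Real.exp t := by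
        rw [← Real.exp_add]; ring_nf
      have h2 : (1 + t)^2 ≤ 4 * Real.exp t := by
        nlinarith [Real.add_one_le_exp (t/2), Real.exp_pos (t/2)]
      have h3 : Real.exp (-t) ≤ 4 / (1+t)^2 := by
        rw [Real.exp_neg, inv_eq_one_div, div_le_div_iff₀ (Real.exp_pos t)
          (by positivity)]
        linarith
      have h4 : ((1+t)^2 : ℝ)⁻¹ ≤ P := by
        have he : ((1+t):ℝ) ^ (-(2:ℝ)) = ((1+t)^2)⁻¹ := by
          rw [Real.rpow_neg (by linarith), Real.rpow_two]
        rw [hPdef, ← he]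
        exact Real.rpow_le_rpow_of_exponent_le (by linarith) (by norm_num)
      calc Real.exp (-t) ≤ 4 / (1+t)^2 := h3
        _ = 4 * ((1+t)^2)⁻¹ := by ring
        _ ≤ 4 * P := by linarith
    calc ∫ ξ in Metric.ball (0:Esp) (1/4), gfun t ‖ξ‖
        ≤ 4 * (∫ ξ in Metric.ball (0:Esp) (1/4), Real.exp (-(2*t) * ‖ξ‖^2)) +
          V * Real.exp (-t) := by rw [← hsplit]; exact hbd
      _ ≤ 4 * ((π / (2*t)) ^ ((3:ℝ)/2)) + V * Real.exp (-t) := by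
          linarith [hgb]
      _ ≤ 4 * (π ^ ((3:ℝ)/2) * P) + V * (4 * P) := by
          have h5 := hpi
          have h6 := hexp
          have h7 : V * Real.exp (-t) ≤ V * (4 * P) :=
            mul_le_mul_of_nonneg_left h6 hVpos.le
          linarith
      _ = (4 * π ^ ((3:ℝ)/2) + 4 * V) * P := by ring
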